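/- Let Q ⊆ V, v ∈ Q with max_{u∈Q} x(v,u) ≥ 1/3, and let (Q1, Q2) with v ∈ Q1 be the pair returned by One-Third-Refine-Cut(Q, v, x). Then Σ_{ {i,j}∈NFPrs(Q1,Q2), {i,j}∈E } x(i,j) + Σ_{ {i,j}∈NFPrs(Q1,Q2), {i,j}∈NE } (1 − x(i,j)) ≥ (1/6)·|{ {i,j} ∈ NFPrs(Q1,Q2) : {i,j} ∈ E }|. -/

import Mathlib

open Finset
open scoped Classical

/-- `cutBall x v Q r` is the set of elements of `Q` at distance `< r` from `v`. -/
noncomputable def cutBall {V : Type*} [DecidableEq V]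
    (x : V → V → ℝ) (v : V) (Q : Finset V) (r : ℝ) : Finset V :=
  Q.filter fun u => x v u < r

/-- The procedure One-Third-Refine-Cut: it returns `({v}, Q ∖ {v})` if
`Σ_{q∈B_{1/3}} x(v,q) ≥ (1/3)|B_{1/3}| − (1/6)|B_{1/2}| − 1/6`,
and `(B_{1/3}, Q ∖ B_{1/3})` otherwise. -/
noncomputable def oneThirdCut {V : Type*} [DecidableEq V]
    (x : V → V → ℝ) (Q : Finset V) (v : V) : Finset V × Finset V :=
  if (1 / 3 : ℝ) * (cutBall x v Q (1 / 3)).card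
        - (1 / 6) * (cutBall x v Q (1 / 2)).card - 1 / 6
      ≤ ∑ q ∈ cutBall x v Q (1 / 3), x v q
  then ({v}, Q \ {v})
  else (cutBall x v Q (1 / 3), Q \ cutBall x v Q (1 / 3))

/-- A pair `{i,j}` is forbidden when it is a non-edge pair of distance one. -/
def Forbidden {V : Type*} (E : V → V → Prop) (x : V → V → ℝ) (i j : V) : Prop :=
  ¬ E i j ∧ x i j = 1

/-!
The inequality says `0 ≤ ∑ pairGain` over `Q1 × Q2`, where a non-forbidden edge contributes
`x - 1/6`, a non-forbidden non-edge `1 - x` and a forbidden pair `0`; in all cases the gain is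
at least `min (x - 1/6) (1 - x)`.

If the cut is `({v}, Q ∖ {v})`, a pair `(v, j)` contributes at least `x(v,j) - 1/6` when
`x(v,j) < 1/3`, at least `1/6` when `1/3 ≤ x(v,j) < 1/2` and at least `0` otherwise; summing
over `j`, these lower bounds add up to exactly the slack of the test that chose this cut.

If the cut is `(B_{1/3}, Q ∖ B_{1/3})`, fix `j ∉ B_{1/3}`. By the triangle inequality through `v`,
`(i, j)` contributes at least `0` when `x(v,j) ≥ 1/2`, and at least `1/6 - x(v,i)` otherwise;
the failed test and `|B_{1/3}| ≤ |B_{1/2}|` make `∑_{i ∈ B_{1/3}} (1/6 - x(v,i))` nonnegative.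
-/

section

variable {V : Type*} (E : V → V → Prop) (x : V → V → ℝ)

noncomputable def pairGain (i j : V) : ℝ :=
  if Forbidden E x i j then 0 else if E i j then x i j - 1 / 6 else 1 - x i j

variable {E x}

lemma le_pairGain {i j : V} {c : ℝ} (h_edge : c ≤ x i j - 1 / 6) (h_nonedge : c ≤ 1 - x i j) :
    c ≤ pairGain E x i j := by
  unfold pairGain Forbidden
  split_ifs with hF hE
  · linarith [hF.2]
  · exact h_edge
  · exact h_nonedge

variable (E x) in
lemma sum_pairGain (S : Finset (V × V)) :
    ∑ p ∈ S, pairGain E x p.1 p.2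
      = (∑ p ∈ S.filter (fun p => ¬ Forbidden E x p.1 p.2 ∧ E p.1 p.2), x p.1 p.2)
        + (∑ p ∈ S.filter (fun p => ¬ Forbidden E x p.1 p.2 ∧ ¬ E p.1 p.2), (1 - x p.1 p.2))
        - 1 / 6 * #(S.filter (fun p => ¬ Forbidden E x p.1 p.2 ∧ E p.1 p.2)) := by
  rw [← nsmul_eq_mul', ← sum_const, sum_filter, sum_filter, sum_filter, ← sum_add_distrib,
    ← sum_sub_distrib]
  refine sum_congr rfl fun p _ => ?_
  by_cases hF : Forbidden E x p.1 p.2 <;> by_cases hE : E p.1 p.2 <;>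
    simp [pairGain, hF, hE]

variable [DecidableEq V]

lemma mem_cutBall {v u : V} {Q : Finset V} {r : ℝ} :
    u ∈ cutBall x v Q r ↔ u ∈ Q ∧ x v u < r :=
  mem_filter

lemma cutBall_subset_cutBall {v : V} {Q : Finset V} {r s : ℝ} (hrs : r ≤ s) :
    cutBall x v Q r ⊆ cutBall x v Q s :=
  fun _ hu => mem_cutBall.2 ⟨(mem_cutBall.1 hu).1, (mem_cutBall.1 hu).2.trans_le hrs⟩

lemma sum_pairGain_pivot_nonneg (hub : ∀ u w, x u w ≤ 1) {Q : Finset V} {v : V} (hv : v ∈ Q)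
    (hvv : x v v = 0)
    (htest : 1 / 3 * #(cutBall x v Q (1 / 3)) - 1 / 6 * #(cutBall x v Q (1 / 2)) - 1 / 6
      ≤ ∑ q ∈ cutBall x v Q (1 / 3), x v q) :
    0 ≤ ∑ j ∈ Q \ {v}, pairGain E x v j := by
  set F : V → ℝ := fun j =>
    (if x v j < 1 / 3 then x v j - 1 / 3 else 0) + (if x v j < 1 / 2 then 1 / 6 else 0)
  have hF_le : ∀ j, F j ≤ pairGain E x v j := fun j =>
    le_pairGain (by simp only [F]; split_ifs <;> linarith)
      (by simp only [F]; split_ifs <;> linarith [hub v j])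
  have hF_sum : ∑ j ∈ Q, F j = ∑ q ∈ cutBall x v Q (1 / 3), x v q
      - 1 / 3 * #(cutBall x v Q (1 / 3)) + 1 / 6 * #(cutBall x v Q (1 / 2)) := by
    simp only [F, cutBall, sum_add_distrib, ← sum_filter, sum_sub_distrib, sum_const, nsmul_eq_mul]
    ring
  have hF_v : F v = -(1 / 6) := by norm_num [F, hvv]
  calc 0 ≤ ∑ j ∈ Q, F j - F v := by linarith
    _ = ∑ j ∈ Q \ {v}, F j := by
      rw [← sum_sdiff (singleton_subset_iff.2 hv), sum_singleton, add_sub_cancel_right]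
    _ ≤ ∑ j ∈ Q \ {v}, pairGain E x v j := sum_le_sum fun j _ => hF_le j

lemma sum_pairGain_ball_nonneg (hsym : ∀ u w, x u w = x w u) (hub : ∀ u w, x u w ≤ 1)
    (htri : ∀ u w p, x u w ≤ x u p + x p w) {Q : Finset V} {v : V}
    (htest : ∑ q ∈ cutBall x v Q (1 / 3), x v q
      ≤ 1 / 3 * #(cutBall x v Q (1 / 3)) - 1 / 6 * #(cutBall x v Q (1 / 2)) - 1 / 6) :
    0 ≤ ∑ i ∈ cutBall x v Q (1 / 3), ∑ j ∈ Q \ cutBall x v Q (1 / 3), pairGain E x i j := by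
  rw [sum_comm]
  refine sum_nonneg fun j hj => ?_
  obtain ⟨hjQ, hjB⟩ := mem_sdiff.1 hj
  have hvj : 1 / 3 ≤ x v j := not_lt.1 fun h => hjB (mem_cutBall.2 ⟨hjQ, h⟩)
  have hdist : ∀ i ∈ cutBall x v Q (1 / 3),
      x v i < 1 / 3 ∧ x v j - x v i ≤ x i j ∧ x i j ≤ x v i + x v j := fun i hi =>
    ⟨(mem_cutBall.1 hi).2, by linarith [htri v j i], by linarith [htri i j v, hsym i v]⟩
  by_cases hvj_half : x v j < 1 / 2
  · have hcard : (#(cutBall x v Q (1 / 3)) : ℝ) ≤ #(cutBall x v Q (1 / 2)) := by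
      exact_mod_cast card_le_card (cutBall_subset_cutBall (by norm_num))
    calc (0 : ℝ) ≤ ∑ i ∈ cutBall x v Q (1 / 3), (1 / 6 - x v i) := by
          rw [sum_sub_distrib, sum_const, nsmul_eq_mul]
          linarith
      _ ≤ _ := sum_le_sum fun i hi => by
          obtain ⟨_, hlow, hup⟩ := hdist i hi
          exact le_pairGain (by linarith) (by linarith)
  · refine sum_nonneg fun i hi => ?_
    obtain ⟨hvi, hlow, -⟩ := hdist i hi
    exact le_pairGain (by linarith) (by linarith [hub i j])

end

theorem stmt7_general {V : Type*} [DecidableEq V]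
    (x : V → V → ℝ)
    (hsym : ∀ u w, x u w = x w u) (hdiag : ∀ u, x u u = 0)
    (hub : ∀ u w, x u w ≤ 1)
    (htri : ∀ u w p, x u w ≤ x u p + x p w)
    (E : V → V → Prop)
    (Q : Finset V) (v : V) (hv : v ∈ Q)
    (Q1 Q2 : Finset V) (hcut : (Q1, Q2) = oneThirdCut x Q v) :
    (1 / 6 : ℝ) *
        ((Q1 ×ˢ Q2).filter (fun p => ¬ Forbidden E x p.1 p.2 ∧ E p.1 p.2)).card
      ≤ (∑ p ∈ (Q1 ×ˢ Q2).filter (fun p => ¬ Forbidden E x p.1 p.2 ∧ E p.1 p.2),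
            x p.1 p.2)
        + ∑ p ∈ (Q1 ×ˢ Q2).filter (fun p => ¬ Forbidden E x p.1 p.2 ∧ ¬ E p.1 p.2),
            (1 - x p.1 p.2) := by
  rw [← sub_nonneg, ← sum_pairGain, sum_product]
  unfold oneThirdCut at hcut
  split_ifs at hcut with htest <;> obtain ⟨rfl, rfl⟩ := Prod.mk.inj hcut
  · rw [sum_singleton]
    exact sum_pairGain_pivot_nonneg hub hv (hdiag v) htest
  · exact sum_pairGain_ball_nonneg hsym hub htri (not_le.1 htest).le

/-- Lemma 4.6: for the pair `(Q1, Q2)` returned by One-Third-Refine-Cut,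
`Σ_{{i,j}∈NFPrs(Q1,Q2)∩E} x(i,j) + Σ_{{i,j}∈NFPrs(Q1,Q2)∩NE} (1 − x(i,j))`
is at least `1/6` times the number of non-forbidden edge pairs between
`Q1` and `Q2`. -/
theorem stmt7 {V : Type*} [Fintype V] [DecidableEq V]
    (x : V → V → ℝ)
    (hsym : ∀ u w, x u w = x w u) (hdiag : ∀ u, x u u = 0)
    (hnn : ∀ u w, 0 ≤ x u w) (hub : ∀ u w, x u w ≤ 1)
    (htri : ∀ u w p, x u w ≤ x u p + x p w)
    (E : V → V → Prop) (hEsym : ∀ u w, E u w ↔ E w u) (hEirr : ∀ u, ¬ E u u)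
    (Q : Finset V) (v : V) (hv : v ∈ Q) (hmax : ∃ u ∈ Q, 1 / 3 ≤ x v u)
    (Q1 Q2 : Finset V) (hcut : (Q1, Q2) = oneThirdCut x Q v) :
    (1 / 6 : ℝ) *
        ((Q1 ×ˢ Q2).filter (fun p => ¬ Forbidden E x p.1 p.2 ∧ E p.1 p.2)).card
      ≤ (∑ p ∈ (Q1 ×ˢ Q2).filter (fun p => ¬ Forbidden E x p.1 p.2 ∧ E p.1 p.2),
            x p.1 p.2)
        + ∑ p ∈ (Q1 ×ˢ Q2).filter (fun p => ¬ Forbidden E x p.1 p.2 ∧ ¬ E p.1 p.2),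
            (1 - x p.1 p.2) :=
  stmt7_general x hsym hdiag hub htri E Q v hv Q1 Q2 hcut
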